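/- Let $\lambda_1, \dots, \lambda_n \ge 0$ with $\lambda_1 \ge n \ge 2$ and $\lambda_1 \ge \lambda_2 \ge \cdots \ge \lambda_n$, and suppose $\lambda_1 \lambda_i \le 1$ for $i \ge 2$. Then $\prod_{i=1}^n (1+\lambda_i^2) \le (1+\lambda_1^2)\left(1+\frac{1}{\lambda_1^2}\right)^{n-1} \le \left(1+\frac{1}{n^2}\right)^n \lambda_1^2 \le 2\lambda_1^2$. -/

import Mathlib

/-! Every factor `1 + λᵢ²` with `i ≥ 2` is at most `1 + 1/λ₁²`, because `λᵢ ≤ 1/λ₁`.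
Since `1 + λ₁² = λ₁² (1 + 1/λ₁²)`, the resulting bound is `(1 + 1/λ₁²)ⁿ λ₁²`, which only grows
when `λ₁` is lowered to `n`; finally `(1 + 1/n²)ⁿ ≤ exp (1/n) ≤ exp (1/2) < 2`. -/

open Finset Real

theorem sq_le_one_div_sq_of_mul_le_one {x l : ℝ} (hx : 0 ≤ x) (hl : 0 < l) (hxl : l * x ≤ 1) :
    x ^ 2 ≤ 1 / l ^ 2 := by
  have hx_le : x ≤ 1 / l := by rw [le_div_iff₀ hl]; linarith
  calc x ^ 2 ≤ (1 / l) ^ 2 := by gcongr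
    _ = 1 / l ^ 2 := by ring

theorem prod_one_add_sq_le_of_mul_le_one {ι : Type*} [Fintype ι] [DecidableEq ι] {f : ι → ℝ}
    (i₀ : ι) (hf : ∀ i, 0 ≤ f i) (hi₀ : 0 < f i₀) (hpair : ∀ i, i ≠ i₀ → f i₀ * f i ≤ 1) :
    ∏ i, (1 + f i ^ 2) ≤ (1 + f i₀ ^ 2) * (1 + 1 / f i₀ ^ 2) ^ (Fintype.card ι - 1) := by
  rw [← mul_prod_erase univ _ (mem_univ i₀), Fintype.card, ← card_erase_of_mem (mem_univ i₀),
    ← prod_const]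
  gcongr with i hi
  exact sq_le_one_div_sq_of_mul_le_one (hf i) hi₀ (hpair i (ne_of_mem_erase hi))

theorem one_add_sq_mul_one_add_one_div_sq_pow {l : ℝ} (hl : l ≠ 0) (m : ℕ) :
    (1 + l ^ 2) * (1 + 1 / l ^ 2) ^ m = (1 + 1 / l ^ 2) ^ (m + 1) * l ^ 2 := by
  have h : 1 + l ^ 2 = (1 + 1 / l ^ 2) * l ^ 2 := by
    field_simp
    ring
  rw [h, pow_succ]
  ring

theorem one_add_sq_mul_one_add_one_div_sq_pow_le {n : ℕ} (hn : 1 ≤ n) {l : ℝ} (hl : n ≤ l) :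
    (1 + l ^ 2) * (1 + 1 / l ^ 2) ^ (n - 1) ≤ (1 + 1 / (n : ℝ) ^ 2) ^ n * l ^ 2 := by
  have hn_pos : (0 : ℝ) < n := by exact_mod_cast hn
  rw [one_add_sq_mul_one_add_one_div_sq_pow (by linarith), Nat.sub_add_cancel hn]
  gcongr

theorem one_add_one_div_sq_pow_le_two {n : ℕ} (hn : 2 ≤ n) : (1 + 1 / (n : ℝ) ^ 2) ^ n ≤ 2 := by
  have hn_two : (2 : ℝ) ≤ n := by exact_mod_cast hn
  have hinv : 1 / (n : ℝ) ≤ 1 / 2 := by gcongr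
  calc (1 + 1 / (n : ℝ) ^ 2) ^ n ≤ exp (1 / (n : ℝ) ^ 2) ^ n := by
        gcongr
        linarith [add_one_le_exp (1 / (n : ℝ) ^ 2)]
    _ = exp (1 / n) := by
        rw [← exp_nat_mul]
        field_simp
    _ ≤ 2 := by
        rw [← le_log_iff_exp_le two_pos]
        linarith [log_two_gt_d9]

/-- if `λ₁ ≥ n ≥ 2`, `λ₁ ≥ λ₂ ≥ ⋯ ≥ λₙ ≥ 0` and `λ₁ λᵢ ≤ 1` for `i ≥ 2`,
then `∏ (1+λᵢ²) ≤ (1+λ₁²)(1+1/λ₁²)^{n-1} ≤ (1+1/n²)ⁿ λ₁² ≤ 2λ₁²`. -/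
theorem stmt_10 (n : ℕ) (hn : 2 ≤ n) (lam : Fin n → ℝ) (l1 : ℝ)
    (hl1 : l1 = lam ⟨0, by omega⟩)
    (hnn : ∀ i, 0 ≤ lam i)
    (h1 : (n : ℝ) ≤ l1)
    (hpair : ∀ i : Fin n, i ≠ ⟨0, by omega⟩ → l1 * lam i ≤ 1) :
    ∏ i, (1 + lam i ^ 2) ≤ (1 + l1 ^ 2) * (1 + 1 / l1 ^ 2) ^ (n - 1) ∧
    (1 + l1 ^ 2) * (1 + 1 / l1 ^ 2) ^ (n - 1) ≤ (1 + 1 / (n : ℝ) ^ 2) ^ n * l1 ^ 2 ∧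
    (1 + 1 / (n : ℝ) ^ 2) ^ n * l1 ^ 2 ≤ 2 * l1 ^ 2 := by
  have hl1_pos : 0 < l1 := by
    have : (2 : ℝ) ≤ n := by exact_mod_cast hn
    linarith
  subst hl1
  refine ⟨?_, one_add_sq_mul_one_add_one_div_sq_pow_le (by omega) h1, ?_⟩
  · simpa using prod_one_add_sq_le_of_mul_le_one _ hnn hl1_pos hpair
  · gcongr
    exact one_add_one_div_sq_pow_le_two hn
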